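/- For any 3×3 complex matrix B, the quantity Φ₂ := 8|B|² + ⟨B, B*⟩ - 2|tr B|² is nonnegative, where ⟨B,B*⟩ = ∑_{i,j} B_{ij} conj(B_{(4-i)(4-j)}) and |B|² = ∑_{i,j}|B_{ij}|². -/

import Mathlib

/-!
Both correction terms are controlled by the Frobenius norm `|B|²`: summing
`2 Re(a b̄) ≥ -(|a|² + |b|²)` over the entries paired by the reversal gives `⟨B, B*⟩ ≥ -|B|²`, and `|tr B|² ≤ 3 ∑ |B_ii|² ≤ 3 |B|²`. Hence
`Φ₂ ≥ (8 - 1 - 6) |B|² ≥ 0`.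
-/

open ComplexConjugate

theorem RCLike.neg_le_re_mul_conj {𝕜 : Type*} [RCLike 𝕜] (a b : 𝕜) :
    -((‖a‖ ^ 2 + ‖b‖ ^ 2) / 2) ≤ re (a * conj b) := by
  have hre : -‖a * conj b‖ ≤ re (a * conj b) := (abs_le.mp (abs_re_le_norm _)).1
  rw [norm_mul, RCLike.norm_conj] at hre
  nlinarith [two_mul_le_add_sq ‖a‖ ‖b‖]

theorem Matrix.neg_sum_norm_sq_le_re_sum_mul_conj_reindex {m n 𝕜 : Type*} [Fintype m]
    [Fintype n] [RCLike 𝕜] (B : Matrix m n 𝕜) (σ : Equiv.Perm m) (τ : Equiv.Perm n) :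
    -∑ i, ∑ j, ‖B i j‖ ^ 2 ≤ RCLike.re (∑ i, ∑ j, B i j * conj (B (σ i) (τ j))) := by
  have hperm : ∑ i, ∑ j, ‖B (σ i) (τ j)‖ ^ 2 = ∑ i, ∑ j, ‖B i j‖ ^ 2 := by
    rw [Equiv.sum_comp σ (fun i => ∑ j, ‖B i (τ j)‖ ^ 2)]
    exact Finset.sum_congr rfl fun i _ => Equiv.sum_comp τ (fun j => ‖B i j‖ ^ 2)
  calc -∑ i, ∑ j, ‖B i j‖ ^ 2
      = ∑ i, ∑ j, -((‖B i j‖ ^ 2 + ‖B (σ i) (τ j)‖ ^ 2) / 2) := by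
        simp only [Finset.sum_neg_distrib, ← Finset.sum_div, Finset.sum_add_distrib, hperm]
        ring
    _ ≤ ∑ i, ∑ j, RCLike.re (B i j * conj (B (σ i) (τ j))) := by
        gcongr with i _ j _
        exact RCLike.neg_le_re_mul_conj _ _
    _ = RCLike.re (∑ i, ∑ j, B i j * conj (B (σ i) (τ j))) := by simp only [map_sum]

theorem Matrix.norm_trace_sq_le {n α : Type*} [Fintype n] [SeminormedAddCommGroup α]
    (B : Matrix n n α) : ‖B.trace‖ ^ 2 ≤ Fintype.card n * ∑ i, ∑ j, ‖B i j‖ ^ 2 :=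
  calc ‖B.trace‖ ^ 2
      ≤ (∑ i, ‖B i i‖) ^ 2 := by gcongr; exact norm_sum_le _ _
    _ ≤ Fintype.card n * ∑ i, ‖B i i‖ ^ 2 := sq_sum_le_card_mul_sum_sq
    _ ≤ Fintype.card n * ∑ i, ∑ j, ‖B i j‖ ^ 2 := by
        gcongr with i _
        exact Finset.single_le_sum (f := fun j => ‖B i j‖ ^ 2) (fun _ _ => by positivity)
          (Finset.mem_univ i)

theorem stmt7 (B : Matrix (Fin 3) (Fin 3) ℂ) :
    0 ≤ 8 * (∑ i, ∑ j, ‖B i j‖ ^ 2)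
      + (∑ i, ∑ j, B i j * (starRingEnd ℂ) (B i.rev j.rev)).re
      - 2 * ‖B.trace‖ ^ 2 := by
  have hpair := B.neg_sum_norm_sq_le_re_sum_mul_conj_reindex Fin.revPerm Fin.revPerm
  have htrace := B.norm_trace_sq_le
  have hfrob : 0 ≤ ∑ i, ∑ j, ‖B i j‖ ^ 2 := by positivity
  simp only [Fin.revPerm_apply, RCLike.re_to_complex, Fintype.card_fin, Nat.cast_ofNat]
    at hpair htrace
  linarith
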